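/- For integers 7 ≤ p ≤ n and θ := (p-1)/n, define (σ_{n,p})^2 := (1/4) Σ_{j=1}^{p-1} (ψ_1((n-j)/2) - ψ_1(n/2)). Then (σ_{n,p})^2 ≥ (1/4)(log(1/(1-θ)) - θ). -/

import Mathlib

/-!
For `x > 0` the trigamma function is the series `ψ₁(x) = ∑ₖ (x + k)⁻²`: differentiate twice Gauss's
limit `log Γ(y) = lim (y log n + log n! - ∑_{k ≤ n} log (y + k))`, the derivatives converging
locally uniformly. Comparing the series with the telescoping sums of `1/a + 1/a²` and
`1/a + 1/(2a²)` gives `1/x + 1/(2x²) ≤ ψ₁(x) ≤ 1/x + 1/x²`. At `(n - j)/2` and `n/2`, together with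
`log (1 + 1/a) ≤ 1/a`, this bounds the `j`-th summand below by
`log (n - j + 1) - log (n - j) - 1/n + (j - 2)/n²`: the logarithms telescope to `log (1/(1 - θ))`,
the terms `-1/n` add up to `-θ`, and `∑_{j=1}^{p-1} (j - 2) ≥ 0`.
-/

/-- The `k`-th polygamma function. -/
noncomputable def polygamma (k : ℕ) (x : ℝ) : ℝ :=
  iteratedDeriv (k + 1) (fun y => Real.log (Real.Gamma y)) x

open Filter Finset Set Topology Real
open scoped Nat

theorem exists_tendstoUniformlyOn_of_norm_sub_succ_le {α E : Type*} [NormedAddCommGroup E]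
    [CompleteSpace E] {F : ℕ → α → E} {u : ℕ → ℝ} {s : Set α} (hu : Summable u)
    (hF : ∀ n, ∀ y ∈ s, ‖F (n + 1) y - F n y‖ ≤ u n) :
    ∃ G, TendstoUniformlyOn F G atTop s := by
  refine ⟨fun y => F 0 y + ∑' n, (F (n + 1) y - F n y), ?_⟩
  have hsum := tendstoUniformlyOn_tsum_nat hu fun n y hy => hF n y hy
  rw [Metric.tendstoUniformlyOn_iff] at hsum ⊢
  intro ε hε
  filter_upwards [hsum ε hε] with n hn y hy
  have hFn : F n y = F 0 y + ∑ i ∈ range n, (F (i + 1) y - F i y) := by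
    rw [sum_range_sub (fun n => F n y)]
    abel
  rw [hFn, dist_add_left]
  exact hn y hy

theorem tsum_le_of_le_sub_succ {f g : ℕ → ℝ} (hf : ∀ n, 0 ≤ f n) (hg : ∀ n, 0 ≤ g n)
    (hfg : ∀ n, f n ≤ g n - g (n + 1)) : ∑' n, f n ≤ g 0 :=
  Real.tsum_le_of_sum_range_le hf fun n => by
    linarith [sum_le_sum fun k (_ : k ∈ range n) => hfg k, sum_range_sub' g n, hg n]

theorem le_tsum_of_sub_succ_le {f g : ℕ → ℝ} (hf : Summable f) (hf0 : ∀ n, 0 ≤ f n)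
    (hg : Tendsto g atTop (𝓝 0)) (hfg : ∀ n, g n - g (n + 1) ≤ f n) : g 0 ≤ ∑' n, f n := by
  have hpartial : ∀ n, g 0 - g n ≤ ∑' n, f n := fun n => by
    rw [← sum_range_sub' g n]
    exact (sum_le_sum fun k _ => hfg k).trans (hf.sum_le_tsum _ fun k _ => hf0 k)
  simpa using le_of_tendsto' (tendsto_const_nhds.sub hg) hpartial

theorem summable_inv_add_sq {c : ℝ} (hc : 0 ≤ c) : Summable fun k : ℕ => ((c + k) ^ 2)⁻¹ :=
  ((Real.summable_one_div_nat_add_rpow c 2).2 one_lt_two).congr fun k => by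
    rw [abs_of_nonneg (by positivity), Real.rpow_two, one_div, add_comm]

theorem log_add_one_sub_log_le {a : ℝ} (ha : 0 < a) : log (a + 1) - log a ≤ a⁻¹ := by
  have := log_le_sub_one_of_pos (x := (a + 1) / a) (by positivity)
  rw [log_div (by positivity) ha.ne'] at this
  convert this using 1
  field_simp
  ring

theorem inv_add_one_le_log_add_one_sub_log {a : ℝ} (ha : 0 < a) :
    (a + 1)⁻¹ ≤ log (a + 1) - log a := by
  have := one_sub_inv_le_log_of_pos (x := (a + 1) / a) (by positivity)
  rw [log_div (by positivity) ha.ne'] at this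
  convert this using 1
  field_simp
  ring

-- The first two derivatives of `y ↦ log (GammaSeq y (n + 1))`; the shift by one avoids the junk
-- value `GammaSeq y 0 = 0`.
noncomputable def digammaSeq (n : ℕ) (y : ℝ) : ℝ :=
  log (n + 1) - ∑ k ∈ range (n + 2), (y + k)⁻¹

noncomputable def trigammaSeq (n : ℕ) (y : ℝ) : ℝ :=
  ∑ k ∈ range (n + 2), ((y + k) ^ 2)⁻¹

theorem log_GammaSeq_succ (n : ℕ) {y : ℝ} (hy : 0 < y) :
    log (GammaSeq y (n + 1)) =
      y * log (n + 1) + log (n + 1)! - ∑ k ∈ range (n + 2), log (y + k) := by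
  have hprod : 0 < ∏ k ∈ range (n + 2), (y + k) := prod_pos fun k _ => by positivity
  rw [GammaSeq, log_div (by positivity) hprod.ne', log_mul (by positivity) (by positivity),
    log_rpow (by positivity), log_prod fun k _ => by positivity]
  push_cast
  ring

theorem tendsto_log_GammaSeq_succ {y : ℝ} (hy : 0 < y) :
    Tendsto (fun n : ℕ => log (GammaSeq y (n + 1))) atTop (𝓝 (log (Gamma y))) :=
  ((GammaSeq_tendsto_Gamma y).comp (tendsto_add_atTop_nat 1)).log (Gamma_pos_of_pos hy).ne'

theorem hasDerivAt_log_GammaSeq_succ (n : ℕ) {y : ℝ} (hy : 0 < y) :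
    HasDerivAt (fun t => log (GammaSeq t (n + 1))) (digammaSeq n y) y := by
  have hsum : HasDerivAt (fun t : ℝ => ∑ k ∈ range (n + 2), log (t + k))
      (∑ k ∈ range (n + 2), (y + k)⁻¹) y :=
    HasDerivAt.fun_sum fun k _ => by
      simpa [one_div] using ((hasDerivAt_id y).add_const (k : ℝ)).log (by positivity)
  have hexp := (((hasDerivAt_mul_const (x := y) (log (n + 1 : ℝ))).add_const
    (log ((n + 1)! : ℝ))).sub hsum)
  refine hexp.congr_of_eventuallyEq ?_
  filter_upwards [Ioi_mem_nhds hy] with t ht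
  exact log_GammaSeq_succ n ht

theorem hasDerivAt_digammaSeq (n : ℕ) {y : ℝ} (hy : 0 < y) :
    HasDerivAt (digammaSeq n) (trigammaSeq n y) y := by
  have hsum : HasDerivAt (fun t : ℝ => ∑ k ∈ range (n + 2), (t + k)⁻¹)
      (∑ k ∈ range (n + 2), -((y + k) ^ 2)⁻¹) y :=
    HasDerivAt.fun_sum fun k _ => by
      simpa [neg_div, Pi.inv_def] using ((hasDerivAt_id y).add_const (k : ℝ)).inv (by positivity)
  unfold digammaSeq
  simpa [trigammaSeq, sum_neg_distrib] using hsum.const_sub (log (n + 1 : ℝ))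

theorem abs_digammaSeq_succ_sub_le (n : ℕ) {y B : ℝ} (hy : 0 < y) (hyB : y ≤ B) :
    |digammaSeq (n + 1) y - digammaSeq n y| ≤ (B + 1) * ((1 + (n : ℝ)) ^ 2)⁻¹ := by
  have hm : (0 : ℝ) < n + 1 := by positivity
  have hdiff : digammaSeq (n + 1) y - digammaSeq n y =
      (log (n + 1 + 1) - log (n + 1)) - (y + (n + 1 + 1))⁻¹ := by
    simp only [digammaSeq, sum_range_succ _ (n + 2)]
    push_cast
    ring_nf
  have hlog_le := log_add_one_sub_log_le hm
  have hlog_ge := inv_add_one_le_log_add_one_sub_log hm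
  have hlow : (y + (n + 1 + 1))⁻¹ ≤ (n + 1 + 1 : ℝ)⁻¹ := inv_anti₀ (by positivity) (by linarith)
  have hup : (n + 1 : ℝ)⁻¹ - (y + (n + 1 + 1))⁻¹ ≤ (B + 1) * ((1 + (n : ℝ)) ^ 2)⁻¹ := by
    rw [inv_sub_inv hm.ne' (by positivity), ← div_eq_mul_inv,
      div_le_div_iff₀ (by positivity) (by positivity)]
    nlinarith [mul_nonneg (mul_nonneg (sub_nonneg.2 hyB) (by positivity : (0:ℝ) ≤ y + (n + 2)))
      hm.le, mul_nonneg (sq_nonneg (y + 1)) hm.le]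
  rw [hdiff, abs_of_nonneg (by linarith)]
  linarith

theorem exists_tendstoUniformlyOn_digammaSeq (B : ℝ) :
    ∃ ψ, TendstoUniformlyOn digammaSeq ψ atTop (Ioo 0 B) :=
  exists_tendstoUniformlyOn_of_norm_sub_succ_le ((summable_inv_add_sq zero_le_one).mul_left _)
    fun n _ hy => abs_digammaSeq_succ_sub_le n hy.1 hy.2.le

theorem tendstoUniformlyOn_trigammaSeq {c : ℝ} (hc : 0 < c) :
    TendstoUniformlyOn trigammaSeq (fun y => ∑' k : ℕ, ((y + k) ^ 2)⁻¹) atTop (Ioi c) :=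
  fun v hv => (tendsto_add_atTop_nat 2).eventually <|
    tendstoUniformlyOn_tsum_nat (summable_inv_add_sq hc.le) (fun k y (hy : c < y) => by
      have hy0 : 0 < y := hc.trans hy
      rw [norm_inv, norm_pow, norm_of_nonneg (by positivity)]
      gcongr) v hv

theorem polygamma_one_eq_tsum {x : ℝ} (hx : 0 < x) :
    polygamma 1 x = ∑' k : ℕ, ((x + k) ^ 2)⁻¹ := by
  set s := Ioo (x / 2) (2 * x)
  have hxs : x ∈ s := ⟨by linarith, by linarith⟩
  have hpos : ∀ y ∈ s, 0 < y := fun y hy => (half_pos hx).trans hy.1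
  -- The limit `ψ` of `digammaSeq` (the digamma function) is never computed, only differentiated.
  obtain ⟨ψ, hψ⟩ := exists_tendstoUniformlyOn_digammaSeq (2 * x)
  replace hψ := hψ.mono (Ioo_subset_Ioo_left (half_pos hx).le)
  have hlogGamma : ∀ y ∈ s, HasDerivAt (fun t => log (Gamma t)) (ψ y) y := fun y hy =>
    hasDerivAt_of_tendstoUniformlyOn isOpen_Ioo hψ
      (Eventually.of_forall fun n z hz => hasDerivAt_log_GammaSeq_succ n (hpos z hz))
      (fun z hz => tendsto_log_GammaSeq_succ (hpos z hz)) hy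
  have hψ' : HasDerivAt ψ (∑' k : ℕ, ((x + k) ^ 2)⁻¹) x :=
    hasDerivAt_of_tendstoUniformlyOn isOpen_Ioo
      ((tendstoUniformlyOn_trigammaSeq (half_pos hx)).mono Ioo_subset_Ioi_self)
      (Eventually.of_forall fun n z hz => hasDerivAt_digammaSeq n (hpos z hz))
      (fun z hz => hψ.tendsto_at hz) hxs
  have hderiv : deriv (fun t => log (Gamma t)) =ᶠ[𝓝 x] ψ :=
    eventually_of_mem (isOpen_Ioo.mem_nhds hxs) fun y hy => (hlogGamma y hy).deriv
  rw [polygamma, iteratedDeriv_succ, iteratedDeriv_one, hderiv.deriv_eq, hψ'.deriv]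

theorem inv_sq_le_sub_succ {a : ℝ} (ha : 0 < a) :
    (a ^ 2)⁻¹ ≤ a⁻¹ + (a ^ 2)⁻¹ - ((a + 1)⁻¹ + ((a + 1) ^ 2)⁻¹) := by
  field_simp
  nlinarith

theorem sub_succ_le_inv_sq {a : ℝ} (ha : 0 < a) :
    a⁻¹ + (2 * a ^ 2)⁻¹ - ((a + 1)⁻¹ + (2 * (a + 1) ^ 2)⁻¹) ≤ (a ^ 2)⁻¹ := by
  field_simp
  nlinarith

theorem tsum_inv_add_sq_le {x : ℝ} (hx : 0 < x) :
    ∑' k : ℕ, ((x + k) ^ 2)⁻¹ ≤ x⁻¹ + (x ^ 2)⁻¹ := by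
  simpa only [Nat.cast_zero, add_zero] using
    tsum_le_of_le_sub_succ (f := fun k : ℕ => ((x + k) ^ 2)⁻¹)
    (g := fun k : ℕ => (x + k)⁻¹ + ((x + k) ^ 2)⁻¹) (fun k => by positivity)
    (fun k => by positivity) fun k => by
      simpa [add_assoc] using inv_sq_le_sub_succ (by positivity : 0 < x + k)

theorem le_tsum_inv_add_sq {x : ℝ} (hx : 0 < x) :
    x⁻¹ + (2 * x ^ 2)⁻¹ ≤ ∑' k : ℕ, ((x + k) ^ 2)⁻¹ := by
  have hinv : Tendsto (fun k : ℕ => (x + k)⁻¹) atTop (𝓝 0) :=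
    (tendsto_atTop_add_const_left _ _ tendsto_natCast_atTop_atTop).inv_tendsto_atTop
  simpa only [Nat.cast_zero, add_zero] using
    le_tsum_of_sub_succ_le (f := fun k : ℕ => ((x + k) ^ 2)⁻¹)
    (g := fun k : ℕ => (x + k)⁻¹ + (2 * (x + k) ^ 2)⁻¹) (summable_inv_add_sq hx.le)
    (fun k => by positivity) (by simpa [mul_comm] using hinv.add ((hinv.pow 2).const_mul 2⁻¹))
    fun k => by simpa [add_assoc] using sub_succ_le_inv_sq (by positivity : 0 < x + k)

theorem polygamma_one_le {x : ℝ} (hx : 0 < x) : polygamma 1 x ≤ x⁻¹ + (x ^ 2)⁻¹ :=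
  polygamma_one_eq_tsum hx ▸ tsum_inv_add_sq_le hx

theorem le_polygamma_one {x : ℝ} (hx : 0 < x) : x⁻¹ + (2 * x ^ 2)⁻¹ ≤ polygamma 1 x :=
  polygamma_one_eq_tsum hx ▸ le_tsum_inv_add_sq hx

theorem log_sub_log_le_polygamma_one_sub {N j : ℝ} (hj : 0 ≤ j) (hjN : j < N) :
    log (N - j + 1) - log (N - j) - N⁻¹ + (j - 2) / N ^ 2 ≤
      polygamma 1 ((N - j) / 2) - polygamma 1 (N / 2) := by
  have ha : 0 < N - j := by linarith
  have hN : 0 < N := by linarith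
  have hlow : 2 * (N - j)⁻¹ + 2 * ((N - j) ^ 2)⁻¹ ≤ polygamma 1 ((N - j) / 2) := by
    convert le_polygamma_one (half_pos ha) using 1
    field_simp
  have hup : polygamma 1 (N / 2) ≤ 2 * N⁻¹ + 4 * (N ^ 2)⁻¹ := by
    convert polygamma_one_le (half_pos hN) using 1
    field_simp
    ring
  have hlog := log_add_one_sub_log_le ha
  have hinv : N⁻¹ + j / N ^ 2 ≤ (N - j)⁻¹ := by
    rw [inv_eq_one_div, inv_eq_one_div, div_add_div _ _ hN.ne' (by positivity),
      div_le_div_iff₀ (by positivity) ha]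
    nlinarith [mul_nonneg (mul_nonneg hj hj) hN.le]
  have hinv_sq : (N ^ 2)⁻¹ ≤ ((N - j) ^ 2)⁻¹ :=
    inv_anti₀ (by positivity) (pow_le_pow_left₀ ha.le (by linarith) 2)
  have hsplit : (j - 2) / N ^ 2 = j / N ^ 2 - 2 * (N ^ 2)⁻¹ := by ring
  linarith

theorem sum_Icc_telescope (f : ℝ → ℝ) (N : ℝ) (q : ℕ) :
    ∑ j ∈ Icc 1 q, (f (N - j + 1) - f (N - j)) = f N - f (N - q) := by
  induction q with
  | zero => simp
  | succ q ih =>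
    rw [sum_Icc_succ_top (by omega), ih]
    push_cast
    ring_nf

theorem sum_Icc_sub_two_nonneg {q : ℕ} (hq : 3 ≤ q) : 0 ≤ ∑ j ∈ Icc 1 q, ((j : ℝ) - 2) := by
  induction q, hq using Nat.le_induction with
  | base => norm_num [sum_Icc_succ_top]
  | succ q hq ih =>
    rw [sum_Icc_succ_top (by omega)]
    have : (3 : ℝ) ≤ q := by exact_mod_cast hq
    push_cast
    linarith

theorem log_div_sub_le_sum_polygamma_one_sub {N : ℝ} {q : ℕ} (hq : 3 ≤ q) (hqN : q < N) :
    log (N / (N - q)) - q / N ≤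
      ∑ j ∈ Icc 1 q, (polygamma 1 ((N - j) / 2) - polygamma 1 (N / 2)) := by
  have hN : 0 < N := by linarith [(Nat.cast_nonneg q : (0 : ℝ) ≤ q)]
  calc log (N / (N - q)) - q / N
      ≤ ∑ j ∈ Icc 1 q, (log (N - j + 1) - log (N - j) - N⁻¹ + (j - 2) / N ^ 2) := by
        rw [sum_add_distrib, sum_sub_distrib, sum_Icc_telescope, sum_const, Nat.card_Icc,
          ← sum_div, log_div hN.ne' (by linarith)]
        have := div_nonneg (sum_Icc_sub_two_nonneg hq) (sq_nonneg N)
        simp only [add_tsub_cancel_right, nsmul_eq_mul, div_eq_mul_inv] at this ⊢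
        linarith
    _ ≤ _ := sum_le_sum fun j hj => log_sub_log_le_polygamma_one_sub (Nat.cast_nonneg j)
        (lt_of_le_of_lt (Nat.cast_le.2 (mem_Icc.1 hj).2) hqN)

/-- For `7 ≤ p ≤ n` and `θ := (p-1)/n`, the variance
`σ²_{n,p} := (1/4) Σ_{j=1}^{p-1} (ψ₁((n-j)/2) - ψ₁(n/2))` satisfies
`σ²_{n,p} ≥ (1/4)(log(1/(1-θ)) - θ)`. -/
theorem variance_lower_bound_rough (p n : ℕ) (hp : 7 ≤ p) (hpn : p ≤ n) :
    (1/4 : ℝ) * (Real.log (1 / (1 - ((p:ℝ) - 1)/n)) - ((p:ℝ) - 1)/n)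
      ≤ (1/4 : ℝ) * ∑ j ∈ Finset.Icc 1 (p - 1),
          (polygamma 1 (((n:ℝ) - (j:ℝ))/2) - polygamma 1 ((n:ℝ)/2)) := by
  have hqn : ((p - 1 : ℕ) : ℝ) < n := by exact_mod_cast (by omega : p - 1 < n)
  have hN : (0 : ℝ) < n := by exact_mod_cast (by omega : 0 < n)
  have hcast : (p : ℝ) - 1 = ((p - 1 : ℕ) : ℝ) := by
    rw [Nat.cast_sub (by omega), Nat.cast_one]
  have hθ : 1 / (1 - ((p - 1 : ℕ) : ℝ) / n) = n / (n - (p - 1 : ℕ)) := by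
    field_simp [(sub_pos.2 hqn).ne']
  rw [hcast, hθ]
  gcongr
  exact log_div_sub_le_sum_polygamma_one_sub (by omega) hqn
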